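/- arXiv:1312.0938 — 5 statements merged into one kernel-verified Lean document; each statement's English description precedes it below -/
import Mathlib

section
/- For all real b > 0, μ ≥ 0, and every integer k ≥ 1: Π_{i=1}^{k} ((b·i + μ)/i) ≤ b^k · e^{μ/b} · k^{μ/b}. -/
/-! Each factor is `b * (1 + c / i)` with `c = μ / b`, and `1 + x ≤ eˣ` bounds the product of the
`1 + c / i` by `exp (c · H_k)`, where `H_k ≤ 1 + log k` is the `k`-th harmonic number. -/

open Finset Real

lemma prod_one_add_div_le_exp_mul_harmonic {c : ℝ} (hc : -1 ≤ c) (k : ℕ) :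
    ∏ i ∈ Icc 1 k, (1 + c / i) ≤ exp (c * harmonic k) := by
  rw [harmonic_eq_sum_Icc]
  push_cast
  rw [mul_sum, exp_sum]
  refine prod_le_prod (fun i hi => ?_) (fun i _ => ?_)
  · have hi : (1 : ℝ) ≤ i := by exact_mod_cast (mem_Icc.mp hi).1
    rw [← neg_le_iff_add_nonneg', le_div_iff₀ (by linarith)]
    nlinarith
  · rw [← div_eq_mul_inv, add_comm]
    exact add_one_le_exp _

lemma prod_one_add_div_le_exp_mul_rpow {c : ℝ} (hc : 0 ≤ c) {k : ℕ} (hk : 1 ≤ k) :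
    ∏ i ∈ Icc 1 k, (1 + c / i) ≤ exp c * (k : ℝ) ^ c := by
  have hk : (0 : ℝ) < k := by exact_mod_cast hk
  calc ∏ i ∈ Icc 1 k, (1 + c / i) ≤ exp (c * harmonic k) :=
        prod_one_add_div_le_exp_mul_harmonic (by linarith) k
    _ ≤ exp (c * (1 + log k)) := by gcongr; exact harmonic_le_one_add_log k
    _ = exp c * (k : ℝ) ^ c := by rw [rpow_def_of_pos hk, ← exp_add]; ring_nf

/-- **Core product estimate for subcritical SIS epidemics (Theorem 1).**
For `b > 0`, `μ ≥ 0` and every integer `k ≥ 1`,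
`∏_{i=1}^{k} (b·i + μ)/i ≤ b^k · e^{μ/b} · k^{μ/b}`. -/
theorem stmt4 (b μ : ℝ) (hb : 0 < b) (hμ : 0 ≤ μ) (k : ℕ) (hk : 1 ≤ k) :
    ∏ i ∈ Finset.Icc 1 k, ((b * i + μ) / i) ≤
      b ^ k * Real.exp (μ / b) * (k : ℝ) ^ (μ / b) := by
  calc ∏ i ∈ Icc 1 k, ((b * i + μ) / i) = ∏ i ∈ Icc 1 k, (b * (1 + μ / b / i)) := by
        refine prod_congr rfl fun i hi => ?_
        have hi : (i : ℝ) ≠ 0 := by exact_mod_cast (Nat.one_le_iff_ne_zero.mp (mem_Icc.mp hi).1)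
        field_simp
    _ = b ^ k * ∏ i ∈ Icc 1 k, (1 + μ / b / i) := by simp [prod_mul_distrib]
    _ ≤ b ^ k * exp (μ / b) * (k : ℝ) ^ (μ / b) := by
        rw [mul_assoc]
        gcongr
        exact prod_one_add_div_le_exp_mul_rpow (by positivity) hk
end

section
/- For every real γ > 1 and every real s ≥ 0: Σ_{k=1}^{∞} γ^{−k}·k^s ≤ Γ(s+1)/(log γ)^{s+1} + (s/(e·log γ))^s, where Γ is the Euler Gamma function and the convention 0^0 = 1 is used for s = 0. -/
/-!
With `b = log γ`, the terms are `f (k + 1)` for `f x = x ^ s * exp (-(b * x))`, which increases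
on `[0, s / b]` and decreases afterwards. On each `[k, k + 1]` a unimodal `f` is at least
`min (f k) (f (k + 1))`, so `f (k + 1)` exceeds `∫ x in k..k + 1, f x` by at most the increment of
`x ↦ f (min x (s / b))` over `[k, k + 1]`; these increments telescope to at most the maximum
`f (s / b) = (s / (e b)) ^ s`, while the integrals add up to at most the Gamma integral
`Γ(s + 1) / b ^ (s + 1)`.
-/

open Real MeasureTheory Set

section Unimodal

variable {f : ℝ → ℝ} {m a b : ℝ}

theorem min_le_of_monotoneOn_of_antitoneOn (hmono : MonotoneOn f (Icc 0 m))
    (hanti : AntitoneOn f (Ici m)) (ha : 0 ≤ a) {x : ℝ} (hx : x ∈ Icc a b) :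
    min (f a) (f b) ≤ f x := by
  rcases le_total x m with hxm | hmx
  · exact (min_le_left _ _).trans (hmono ⟨ha, hx.1.trans hxm⟩ ⟨ha.trans hx.1, hxm⟩ hx.1)
  · exact (min_le_right _ _).trans (hanti hmx (hmx.trans hx.2) hx.2)

theorem sub_min_le_of_monotoneOn_of_antitoneOn (hmono : MonotoneOn f (Icc 0 m))
    (hanti : AntitoneOn f (Ici m)) (ha : 0 ≤ a) (hab : a ≤ b) :
    f b - min (f a) (f b) ≤ f (min b m) - f (min a m) := by
  rcases le_total b m with hbm | hmb
  · rw [min_eq_left hbm, min_eq_left (hab.trans hbm),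
      min_eq_left (hmono ⟨ha, hab.trans hbm⟩ ⟨ha.trans hab, hbm⟩ hab)]
  rcases le_total a m with ham | hma
  · rw [min_eq_right hmb, min_eq_left ham]
    have hfa : f a ≤ f m := hmono ⟨ha, ham⟩ ⟨ha.trans ham, le_rfl⟩ ham
    have hfb : f b ≤ f m := hanti self_mem_Ici hmb hmb
    rcases min_cases (f a) (f b) with ⟨hmin, -⟩ | ⟨hmin, -⟩ <;> rw [hmin] <;> linarith
  · rw [min_eq_right hmb, min_eq_right hma, min_eq_right (hanti hma hmb hab)]
    simp

theorem sum_range_le_intervalIntegral_of_monotoneOn_of_antitoneOn (hm : 0 ≤ m)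
    (hmono : MonotoneOn f (Icc 0 m)) (hanti : AntitoneOn f (Ici m))
    (hcont : ContinuousOn f (Ici 0)) (N : ℕ) :
    ∑ k ∈ Finset.range N, f (k + 1) ≤ (∫ x in (0 : ℝ)..N, f x) + (f m - f 0) := by
  set g : ℕ → ℝ := fun k => f (min (k : ℝ) m)
  have hint : ∀ k : ℕ, IntervalIntegrable f volume k (k + 1) := fun k =>
    (hcont.mono (Icc_subset_Ici_self.trans (Ici_subset_Ici.2 k.cast_nonneg))).intervalIntegrable_of_Icc
      (by linarith)
  have hterm : ∀ k : ℕ, f (k + 1) ≤ (∫ x in (k : ℝ)..k + 1, f x) + (g (k + 1) - g k) := by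
    intro k
    have hk : (0 : ℝ) ≤ k := k.cast_nonneg
    have hmin : min (f k) (f (k + 1)) ≤ ∫ x in (k : ℝ)..k + 1, f x := by
      simpa using intervalIntegral.integral_mono_on (by linarith) intervalIntegrable_const
        (hint k) fun x hx => min_le_of_monotoneOn_of_antitoneOn hmono hanti hk hx
    have hinc := sub_min_le_of_monotoneOn_of_antitoneOn hmono hanti hk
      (by linarith : (k : ℝ) ≤ k + 1)
    simp only [g, Nat.cast_add, Nat.cast_one]
    linarith
  have hgN : g N ≤ f m := hmono ⟨le_min N.cast_nonneg hm, min_le_right _ _⟩ ⟨hm, le_rfl⟩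
    (min_le_right _ _)
  have hg0 : g 0 = f 0 := by simp [g, min_eq_left hm]
  calc ∑ k ∈ Finset.range N, f (k + 1)
      ≤ ∑ k ∈ Finset.range N, ((∫ x in (k : ℝ)..k + 1, f x) + (g (k + 1) - g k)) :=
        Finset.sum_le_sum fun k _ => hterm k
    _ = (∫ x in (0 : ℝ)..N, f x) + (g N - g 0) := by
        rw [Finset.sum_add_distrib, Finset.sum_range_sub]
        congr 1
        simpa using intervalIntegral.sum_integral_adjacent_intervals
          (a := fun k : ℕ => (k : ℝ)) fun k _ => by simpa using hint k
    _ ≤ (∫ x in (0 : ℝ)..N, f x) + (f m - f 0) := by linarith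

theorem summable_and_tsum_le_of_monotoneOn_of_antitoneOn (hm : 0 ≤ m)
    (hmono : MonotoneOn f (Icc 0 m)) (hanti : AntitoneOn f (Ici m))
    (hcont : ContinuousOn f (Ici 0)) (hnonneg : ∀ x ∈ Ici 0, 0 ≤ f x)
    (hf : IntegrableOn f (Ioi 0)) :
    Summable (fun k : ℕ => f (k + 1)) ∧ ∑' k : ℕ, f (k + 1) ≤ (∫ x in Ioi 0, f x) + f m := by
  have hbound : ∀ N : ℕ, ∑ k ∈ Finset.range N, f (k + 1) ≤ (∫ x in Ioi 0, f x) + f m := by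
    intro N
    have hIoc : ∫ x in (0 : ℝ)..N, f x ≤ ∫ x in Ioi 0, f x := by
      rw [intervalIntegral.integral_of_le N.cast_nonneg]
      refine setIntegral_mono_set hf ?_ (LE.le.eventuallyLE Ioc_subset_Ioi_self)
      filter_upwards [self_mem_ae_restrict measurableSet_Ioi] with x hx
      exact hnonneg x (Ioi_subset_Ici_self hx)
    linarith [sum_range_le_intervalIntegral_of_monotoneOn_of_antitoneOn hm hmono hanti hcont N,
      hnonneg 0 self_mem_Ici]
  have hterm : ∀ k : ℕ, 0 ≤ f (k + 1) := fun k => hnonneg _ (mem_Ici.2 (by positivity))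
  exact ⟨summable_of_sum_range_le hterm hbound, Real.tsum_le_of_sum_range_le hterm hbound⟩

end Unimodal

section GammaIntegrand

variable {s b : ℝ}

theorem continuous_rpow_mul_exp_neg_mul (hs : 0 ≤ s) :
    Continuous fun x : ℝ => x ^ s * exp (-(b * x)) :=
  (continuous_rpow_const hs).mul (by fun_prop)

theorem hasDerivAt_rpow_mul_exp_neg_mul {x : ℝ} (hx : 0 < x) :
    HasDerivAt (fun x : ℝ => x ^ s * exp (-(b * x)))
      (x ^ s * exp (-(b * x)) * (s / x - b)) x := by
  refine ((hasDerivAt_rpow_const (p := s) (Or.inl hx.ne')).mul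
    ((hasDerivAt_id x).const_mul b).neg.exp).congr_deriv ?_
  rw [rpow_sub_one hx.ne']
  simp only [id, mul_one, Pi.neg_apply]
  ring

theorem monotoneOn_rpow_mul_exp_neg_mul (hs : 0 ≤ s) (hb : 0 < b) :
    MonotoneOn (fun x : ℝ => x ^ s * exp (-(b * x))) (Icc 0 (s / b)) := by
  refine monotoneOn_of_deriv_nonneg (convex_Icc _ _)
    (continuous_rpow_mul_exp_neg_mul hs).continuousOn
    (fun x hx => ?_) fun x hx => ?_ <;> rw [interior_Icc] at hx
  · exact (hasDerivAt_rpow_mul_exp_neg_mul hx.1).differentiableAt.differentiableWithinAt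
  · rw [(hasDerivAt_rpow_mul_exp_neg_mul hx.1).deriv]
    have hbx : b ≤ s / x := by
      rw [le_div_iff₀ hx.1, mul_comm, ← le_div_iff₀ hb]
      exact hx.2.le
    exact mul_nonneg (mul_nonneg (rpow_nonneg hx.1.le s) (exp_pos _).le) (sub_nonneg.2 hbx)

theorem antitoneOn_rpow_mul_exp_neg_mul (hs : 0 ≤ s) (hb : 0 < b) :
    AntitoneOn (fun x : ℝ => x ^ s * exp (-(b * x))) (Ici (s / b)) := by
  have hpos : ∀ x ∈ interior (Ici (s / b)), 0 < x := fun x hx => by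
    rw [interior_Ici] at hx
    exact (div_nonneg hs hb.le).trans_lt hx
  refine antitoneOn_of_deriv_nonpos (convex_Ici _)
    (continuous_rpow_mul_exp_neg_mul hs).continuousOn
    (fun x hx => ?_) fun x hx => ?_
  · exact (hasDerivAt_rpow_mul_exp_neg_mul (hpos x hx)).differentiableAt.differentiableWithinAt
  · have hx0 := hpos x hx
    rw [(hasDerivAt_rpow_mul_exp_neg_mul hx0).deriv]
    rw [interior_Ici, mem_Ioi, div_lt_iff₀ hb] at hx
    have hsx : s / x ≤ b := by rw [div_le_iff₀ hx0]; linarith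
    exact mul_nonpos_of_nonneg_of_nonpos (by positivity) (sub_nonpos.2 hsx)

theorem rpow_mul_exp_neg_mul_div_self (hs : 0 ≤ s) (hb : 0 < b) :
    (s / b) ^ s * exp (-(b * (s / b))) = (s / (exp 1 * b)) ^ s := by
  rw [mul_div_cancel₀ s hb.ne', mul_comm (exp 1), ← div_div,
    div_rpow (div_nonneg hs hb.le) (exp_pos 1).le, exp_one_rpow, exp_neg, ← div_eq_mul_inv]

theorem integral_rpow_mul_exp_neg_mul_Ioi_eq (hs : 0 ≤ s) (hb : 0 < b) :
    ∫ x in Ioi (0 : ℝ), x ^ s * exp (-(b * x)) = Gamma (s + 1) / b ^ (s + 1) := by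
  have h := integral_rpow_mul_exp_neg_mul_Ioi (a := s + 1) (by linarith) hb
  rw [add_sub_cancel_right] at h
  rw [h, div_rpow zero_le_one hb.le, one_rpow]
  ring

theorem integrableOn_rpow_mul_exp_neg_mul (hs : 0 ≤ s) (hb : 0 < b) :
    IntegrableOn (fun x : ℝ => x ^ s * exp (-(b * x))) (Ioi 0) := by
  refine Integrable.of_integral_ne_zero ?_
  rw [integral_rpow_mul_exp_neg_mul_Ioi_eq hs hb]
  exact (div_pos (Gamma_pos_of_pos (by linarith)) (rpow_pos_of_pos hb _)).ne'

end GammaIntegrand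

/-- **Sum–integral comparison (series estimate in the proof of Theorem 4).**
For `γ > 1` and `s ≥ 0`, the series `∑_{k=1}^{∞} γ^{-k} k^s` converges and
`∑_{k=1}^{∞} γ^{-k} k^s ≤ Γ(s+1)/(log γ)^{s+1} + (s/(e·log γ))^s`
(with the convention `0^0 = 1`, as in `Real.rpow`, for `s = 0`).
The sum over `k ≥ 1` is written as a sum over `k : ℕ` of the terms at `k + 1`. -/
theorem stmt7 (γ s : ℝ) (hγ : 1 < γ) (hs : 0 ≤ s) :
    Summable (fun k : ℕ => γ ^ (-((k : ℝ) + 1)) * ((k : ℝ) + 1) ^ s) ∧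
    ∑' k : ℕ, γ ^ (-((k : ℝ) + 1)) * ((k : ℝ) + 1) ^ s ≤
      Real.Gamma (s + 1) / (Real.log γ) ^ (s + 1) +
        (s / (Real.exp 1 * Real.log γ)) ^ s := by
  have hb : 0 < log γ := log_pos hγ
  have hterm : (fun k : ℕ => γ ^ (-((k : ℝ) + 1)) * ((k : ℝ) + 1) ^ s) =
      fun k : ℕ => ((k : ℝ) + 1) ^ s * exp (-(log γ * ((k : ℝ) + 1))) := by
    ext k
    rw [rpow_def_of_pos (by linarith), mul_comm, mul_neg]
  rw [hterm, ← integral_rpow_mul_exp_neg_mul_Ioi_eq hs hb,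
    ← rpow_mul_exp_neg_mul_div_self hs hb]
  exact summable_and_tsum_le_of_monotoneOn_of_antitoneOn (div_nonneg hs hb.le)
    (monotoneOn_rpow_mul_exp_neg_mul hs hb) (antitoneOn_rpow_mul_exp_neg_mul hs hb)
    (continuous_rpow_mul_exp_neg_mul hs).continuousOn
    (fun x hx => mul_nonneg (rpow_nonneg hx s) (exp_pos _).le)
    (integrableOn_rpow_mul_exp_neg_mul hs hb)
end

section
/- For every real b with 0 < b < 1 there exists a constant C > 0 (depending only on b) such that for every real μ ≥ 1 and every integer n ≥ 1: Σ_{k=1}^{n} Π_{i=1}^{k} ((b·i + μ)/i) ≤ exp(C·μ·log(μ+1)). -/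
/-!
Each factor `(b i + μ) / i = b + μ / i` is at most `μ + 1`, and once `i` exceeds
`M = ⌈2μ / (1 - b)⌉` it is at most `r = (1 + b) / 2 < 1`. Hence the `k`-th product is at most
`(μ + 1)^M r^(k - M)`, and summing the geometric tail bounds the whole sum by
`((μ + 1) / r)^M / (1 - r) ≤ (μ + 1)^(2M) · 2 / (1 - b)`. Since `M = O(μ)`, this is
`exp (O(μ log (μ + 1)))`.
-/

open Finset Real

section ProductsWithEventuallySmallFactors

variable {a : ℕ → ℝ} {A r : ℝ} {M : ℕ}

theorem prod_Icc_le_pow_mul_pow (ha : ∀ i, 0 ≤ a i) (hA : 1 ≤ A)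
    (haA : ∀ i, 1 ≤ i → a i ≤ A) (har : ∀ i, M < i → a i ≤ r) (k : ℕ) :
    ∏ i ∈ Icc 1 k, a i ≤ A ^ M * r ^ (k - M) := by
  have hr : 0 ≤ r := (ha (M + 1)).trans (har _ M.lt_succ_self)
  have hsplit : ∏ i ∈ Icc 1 k, a i =
      (∏ i ∈ Ioc 0 (min k M), a i) * ∏ i ∈ Ioc (min k M) k, a i :=
    (prod_Ioc_consecutive a (Nat.zero_le _) (min_le_left k M)).symm
  have hhead : ∏ i ∈ Ioc 0 (min k M), a i ≤ A ^ M :=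
    calc ∏ i ∈ Ioc 0 (min k M), a i ≤ ∏ _i ∈ Ioc 0 (min k M), A :=
          prod_le_prod (fun i _ => ha i) fun i hi => haA i (mem_Ioc.1 hi).1
      _ = A ^ min k M := by rw [prod_const, Nat.card_Ioc, Nat.sub_zero]
      _ ≤ A ^ M := pow_le_pow_right₀ hA (min_le_right k M)
  have htail : ∏ i ∈ Ioc (min k M) k, a i ≤ r ^ (k - M) :=
    calc ∏ i ∈ Ioc (min k M) k, a i ≤ ∏ _i ∈ Ioc (min k M) k, r :=
          prod_le_prod (fun i _ => ha i) fun i hi => har i (by grind)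
      _ = r ^ (k - M) := by rw [prod_const, Nat.card_Ioc]; congr 1; omega
  rw [hsplit]
  exact mul_le_mul hhead htail (prod_nonneg fun i _ => ha i) (by positivity)

theorem sum_Icc_prod_Icc_le (ha : ∀ i, 0 ≤ a i) (hA : 1 ≤ A)
    (haA : ∀ i, 1 ≤ i → a i ≤ A) (har : ∀ i, M < i → a i ≤ r) (hr0 : 0 < r) (hr1 : r < 1)
    (n : ℕ) :
    ∑ k ∈ Icc 1 n, ∏ i ∈ Icc 1 k, a i ≤ (A / r) ^ M / (1 - r) := by
  have hpow (k : ℕ) : r ^ (k - M) ≤ r ^ k / r ^ M := by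
    rw [le_div_iff₀ (by positivity), ← pow_add]
    exact pow_le_pow_of_le_one hr0.le hr1.le (by omega)
  calc ∑ k ∈ Icc 1 n, ∏ i ∈ Icc 1 k, a i
      ≤ ∑ k ∈ Icc 1 n, A ^ M * (r ^ k / r ^ M) := sum_le_sum fun k _ =>
        (prod_Icc_le_pow_mul_pow ha hA haA har k).trans
          (mul_le_mul_of_nonneg_left (hpow k) (by positivity))
    _ = (A / r) ^ M * ∑ k ∈ Ico 1 (n + 1), r ^ k := by
        rw [Ico_add_one_right_eq_Icc, mul_sum, div_pow]
        exact sum_congr rfl fun k _ => by ring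
    _ ≤ (A / r) ^ M * (r ^ 1 / (1 - r)) := by
        gcongr
        exact geom_sum_Ico_le_of_lt_one hr0.le hr1
    _ ≤ (A / r) ^ M * (1 / (1 - r)) := by
        have : 0 < 1 - r := sub_pos.2 hr1
        gcongr
        rw [pow_one]; exact hr1.le
    _ = (A / r) ^ M / (1 - r) := mul_one_div _ _

end ProductsWithEventuallySmallFactors

section SISFactors

variable {b μ : ℝ}

theorem mul_add_div_le_add_one (hb : b ≤ 1) (hμ : 0 ≤ μ) {i : ℕ} (hi : 1 ≤ i) :
    (b * i + μ) / i ≤ μ + 1 := by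
  have hi' : (1 : ℝ) ≤ i := by exact_mod_cast hi
  rw [div_le_iff₀ (by linarith)]
  nlinarith

theorem mul_add_div_le_of_ceil_lt (hb : b < 1) {i : ℕ} (hi : ⌈2 * μ / (1 - b)⌉₊ < i) :
    (b * i + μ) / i ≤ (1 + b) / 2 := by
  have hi' : 2 * μ / (1 - b) < i := (Nat.le_ceil _).trans_lt (by exact_mod_cast hi)
  have hμi : 2 * μ < (1 - b) * i := by rwa [div_lt_iff₀' (sub_pos.2 hb)] at hi'
  rw [div_le_iff₀ (by exact_mod_cast (Nat.zero_le _).trans_lt hi)]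
  linarith

theorem natCeil_two_mul_div_le (hb0 : 0 ≤ b) (hb1 : b < 1) (hμ : 1 ≤ μ) :
    (⌈2 * μ / (1 - b)⌉₊ : ℝ) ≤ 3 * μ / (1 - b) := by
  have h1b : 0 < 1 - b := sub_pos.2 hb1
  have : 1 ≤ μ / (1 - b) := by rw [le_div_iff₀ h1b]; linarith
  calc (⌈2 * μ / (1 - b)⌉₊ : ℝ) ≤ 2 * μ / (1 - b) + 1 := (Nat.ceil_lt_add_one (by positivity)).le
    _ ≤ 3 * μ / (1 - b) := by rw [mul_div_assoc, mul_div_assoc]; linarith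

theorem two_mul_natCeil_mul_log_add_le (hb0 : 0 ≤ b) (hb1 : b < 1) (hμ : 1 ≤ μ) :
    2 * ⌈2 * μ / (1 - b)⌉₊ * log (μ + 1) + 2 / (1 - b) ≤ 10 / (1 - b) * μ * log (μ + 1) := by
  have h1b : 0 < 1 - b := sub_pos.2 hb1
  have hlog2 : 1 / 2 < log 2 := by linarith [log_two_gt_d9]
  have hlog : 1 / 2 < log (μ + 1) := hlog2.trans_le (log_le_log two_pos (by linarith))
  have hceil : 2 * ⌈2 * μ / (1 - b)⌉₊ * log (μ + 1) ≤ 6 * μ * log (μ + 1) / (1 - b) := by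
    calc 2 * ⌈2 * μ / (1 - b)⌉₊ * log (μ + 1) = ⌈2 * μ / (1 - b)⌉₊ * (2 * log (μ + 1)) := by ring
      _ ≤ 3 * μ / (1 - b) * (2 * log (μ + 1)) := by gcongr; exact natCeil_two_mul_div_le hb0 hb1 hμ
      _ = 6 * μ * log (μ + 1) / (1 - b) := by ring
  have hconst : 2 / (1 - b) ≤ 4 * μ * log (μ + 1) / (1 - b) :=
    div_le_div_of_nonneg_right (by nlinarith) h1b.le
  calc _ ≤ 6 * μ * log (μ + 1) / (1 - b) + 4 * μ * log (μ + 1) / (1 - b) := add_le_add hceil hconst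
    _ = 10 / (1 - b) * μ * log (μ + 1) := by ring

end SISFactors

/-- **Core quantitative estimate of Theorem 4.**
For every `0 < b < 1` there is a constant `C > 0` (depending only on `b`) such that for
every real `μ ≥ 1` and every integer `n ≥ 1`,
`∑_{k=1}^{n} ∏_{i=1}^{k} (b·i + μ)/i ≤ exp(C·μ·log(μ+1))`. -/
theorem stmt8 (b : ℝ) (hb0 : 0 < b) (hb1 : b < 1) :
    ∃ C : ℝ, 0 < C ∧ ∀ μ : ℝ, 1 ≤ μ → ∀ n : ℕ, 1 ≤ n →
      ∑ k ∈ Finset.Icc 1 n, ∏ i ∈ Finset.Icc 1 k, ((b * i + μ) / i) ≤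
        Real.exp (C * μ * Real.log (μ + 1)) := by
  have h1b : 0 < 1 - b := sub_pos.2 hb1
  refine ⟨10 / (1 - b), by positivity, fun μ hμ n _ => ?_⟩
  set M := ⌈2 * μ / (1 - b)⌉₊
  -- `2 / (1 + b) ≤ 2 ≤ μ + 1`
  have hbase : (μ + 1) / ((1 + b) / 2) ≤ (μ + 1) ^ 2 := by
    rw [div_le_iff₀ (by positivity)]; nlinarith
  calc ∑ k ∈ Icc 1 n, ∏ i ∈ Icc 1 k, ((b * i + μ) / i)
      ≤ ((μ + 1) / ((1 + b) / 2)) ^ M / (1 - (1 + b) / 2) :=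
        sum_Icc_prod_Icc_le (fun i => by positivity) (by linarith)
          (fun i => mul_add_div_le_add_one hb1.le (by linarith))
          (fun i => mul_add_div_le_of_ceil_lt hb1) (by positivity) (by linarith) n
    _ ≤ ((μ + 1) ^ 2) ^ M / ((1 - b) / 2) := by
        rw [show 1 - (1 + b) / 2 = (1 - b) / 2 by ring]
        gcongr
    _ = (μ + 1) ^ (2 * M) * (2 / (1 - b)) := by rw [pow_mul]; field_simp
    _ = exp (2 * M * log (μ + 1)) * (2 / (1 - b)) := by
        rw [← exp_log (by positivity : 0 < (μ + 1) ^ (2 * M)), log_pow]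
        push_cast
        ring
    _ ≤ exp (2 * M * log (μ + 1)) * exp (2 / (1 - b)) := by
        gcongr; linarith [add_one_le_exp (2 / (1 - b))]
    _ ≤ exp (10 / (1 - b) * μ * log (μ + 1)) := by
        rw [← exp_add, exp_le_exp]
        exact two_mul_natCeil_mul_log_add_le hb0.le hb1 hμ
end

section
/- For every real β > 0 and all integers m, k with 1 ≤ k ≤ m: Π_{i=1}^{k} (β·(m−i+1))/(β·(m−i+1) + i) ≥ (1 + k/(β·(m−k+1)))^{−k} ≥ 1 − k²/(β·(m−k+1)). -/
/-- **Lemma 3 (SIS epidemic on a star): product lower bound.**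
For `β > 0` and integers `1 ≤ k ≤ m`,
`∏_{i=1}^{k} β(m−i+1)/(β(m−i+1)+i) ≥ (1 + k/(β(m−k+1)))^{−k} ≥ 1 − k²/(β(m−k+1))`. -/
theorem stmt11 (β : ℝ) (hβ : 0 < β) (m k : ℕ) (hk : 1 ≤ k) (hkm : k ≤ m) :
    (1 + (k : ℝ) / (β * ((m : ℝ) - (k : ℝ) + 1))) ^ (-(k : ℤ)) ≤
      (∏ i ∈ Finset.Icc 1 k,
        (β * ((m : ℝ) - (i : ℝ) + 1)) / (β * ((m : ℝ) - (i : ℝ) + 1) + (i : ℝ))) ∧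
    1 - (k : ℝ) ^ 2 / (β * ((m : ℝ) - (k : ℝ) + 1)) ≤
      (1 + (k : ℝ) / (β * ((m : ℝ) - (k : ℝ) + 1))) ^ (-(k : ℤ)) := by
  have hkm' : (k : ℝ) ≤ (m : ℝ) := by exact_mod_cast hkm
  have hk' : (1 : ℝ) ≤ (k : ℝ) := by exact_mod_cast hk
  have hD : 0 < β * ((m : ℝ) - (k : ℝ) + 1) := by nlinarith
  set D := β * ((m : ℝ) - (k : ℝ) + 1) with hDdef
  set x := (k : ℝ) / D with hxdef
  have hx0 : 0 ≤ x := div_nonneg (by positivity) hD.le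
  have h1x : 0 < 1 + x := by linarith
  have hzpow : (1 + x) ^ (-(k : ℤ)) = (1 / (1 + x)) ^ k := by
    rw [zpow_neg, zpow_natCast, one_div, inv_pow]
  constructor
  · rw [hzpow]
    have : (1 / (1 + x)) ^ k = ∏ i ∈ Finset.Icc 1 k, (1 / (1 + x)) := by
      rw [Finset.prod_const, Nat.card_Icc]; norm_num
    rw [this]
    apply Finset.prod_le_prod
    · intro i _; positivity
    · intro i hi
      obtain ⟨hi1, hik⟩ := Finset.mem_Icc.mp hi
      have hi1' : (1 : ℝ) ≤ (i : ℝ) := by exact_mod_cast hi1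
      have hik' : (i : ℝ) ≤ (k : ℝ) := by exact_mod_cast hik
      have hA : 0 < β * ((m : ℝ) - (i : ℝ) + 1) := by nlinarith
      set A := β * ((m : ℝ) - (i : ℝ) + 1) with hAdef
      have hDA : D ≤ A := by
        rw [hDdef, hAdef]; nlinarith
      rw [div_le_div_iff₀ h1x (by linarith : (0:ℝ) < A + (i:ℝ))]
      have hAx : (i : ℝ) ≤ A * x := by
        rw [hxdef, ← mul_div_assoc, le_div_iff₀ hD]
        nlinarith
      nlinarith
  · rw [hzpow]
    have hk2 : (k : ℝ) ^ 2 / D = (k : ℝ) * x := by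
      rw [hxdef]; ring
    rw [hk2]
    rcases le_or_gt x 1 with hx1 | hx1
    · have hb : 1 + (k : ℝ) * (-x) ≤ (1 + (-x)) ^ k := by
        apply one_add_mul_le_pow; linarith
      have h1 : (1 : ℝ) - x ≤ 1 / (1 + x) := by
        rw [le_div_iff₀ h1x]; nlinarith
      have h2 : (1 - x) ^ k ≤ (1 / (1 + x)) ^ k :=
        pow_le_pow_left₀ (by linarith) h1 k
      have : 1 + (k : ℝ) * (-x) = 1 - (k : ℝ) * x := by ring
      rw [this] at hb
      have : (1 + (-x)) = 1 - x := by ring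
      rw [this] at hb
      linarith
    · have : 1 - (k : ℝ) * x ≤ 0 := by nlinarith
      have : (0 : ℝ) < (1 / (1 + x)) ^ k := by positivity
      linarith
end

section
/- For all real β with 0 < β ≤ 1, all real μ > 0, and every integer n ≥ 1: Π_{j=1}^{n} j/(μ + (j+1)·(1+β)) ≤ exp(μ²·π²/12)·(n+1)^{−μ·(1−β)}. -/
/-!
Dropping `β` from the denominators, each factor is at most `j / (j + μ) = 1 / (1 + μ/j)`, and
`log (1 + x) ≥ x - x²/2` turns this into `exp ((μ/j)²/2 - μ/j)`. In the product, the quadratic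
terms add up to at most `μ² ζ(2) / 2 = μ² π² / 12` and the linear ones to at least
`μ log (n + 1)`, which gives the stronger decay `(n + 1) ^ (-μ)`.
-/

open Finset Real

lemma Real.sub_sq_div_two_le_log_one_add {x : ℝ} (hx : 0 ≤ x) :
    x - x ^ 2 / 2 ≤ log (1 + x) := by
  refine le_trans ?_ (le_log_one_add_of_nonneg hx)
  rw [le_div_iff₀ (by linarith)]
  nlinarith [pow_nonneg hx 3]

lemma Real.inv_one_add_le_exp_sq_div_two_sub {x : ℝ} (hx : 0 ≤ x) :
    (1 + x)⁻¹ ≤ exp (x ^ 2 / 2 - x) := by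
  rw [← neg_sub, exp_neg]
  refine inv_anti₀ (exp_pos _) ?_
  calc exp (x - x ^ 2 / 2) ≤ exp (log (1 + x)) := exp_le_exp.2 (sub_sq_div_two_le_log_one_add hx)
    _ = 1 + x := exp_log (by linarith)

lemma Real.log_add_one_le_sum_Icc_inv (n : ℕ) :
    log (n + 1) ≤ ∑ j ∈ Icc 1 n, (j : ℝ)⁻¹ := by
  simpa [harmonic_eq_sum_Icc] using log_add_one_le_harmonic n

lemma sum_Icc_one_div_sq_le_pi_sq_div_six (n : ℕ) :
    ∑ j ∈ Icc 1 n, 1 / (j : ℝ) ^ 2 ≤ π ^ 2 / 6 :=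
  sum_le_hasSum _ (fun _ _ ↦ by positivity) hasSum_zeta_two

section

variable {β μ : ℝ}

lemma natCast_div_add_succ_mul_le_exp (hβ : 0 ≤ β) (hμ : 0 ≤ μ) {j : ℕ} (hj : 0 < j) :
    (j : ℝ) / (μ + (j + 1) * (1 + β)) ≤ exp ((μ / j) ^ 2 / 2 - μ / j) := by
  have hj' : (0 : ℝ) < j := by exact_mod_cast hj
  calc (j : ℝ) / (μ + (j + 1) * (1 + β)) ≤ j / (j + μ) :=
        div_le_div_of_nonneg_left hj'.le (by positivity) (by nlinarith)
    _ = (1 + μ / j)⁻¹ := by field_simp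
    _ ≤ _ := inv_one_add_le_exp_sq_div_two_sub (by positivity)

lemma prod_Icc_natCast_div_add_succ_mul_le (hβ : 0 ≤ β) (hμ : 0 ≤ μ) (n : ℕ) :
    ∏ j ∈ Icc 1 n, (j : ℝ) / (μ + (j + 1) * (1 + β)) ≤
      exp (μ ^ 2 * π ^ 2 / 12) * ((n : ℝ) + 1) ^ (-μ) := by
  have hsum : ∑ j ∈ Icc 1 n, ((μ / j) ^ 2 / 2 - μ / j) ≤ μ ^ 2 * π ^ 2 / 12 - μ * log (n + 1) := by
    have hsplit : ∑ j ∈ Icc 1 n, ((μ / j) ^ 2 / 2 - μ / j) =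
        μ ^ 2 / 2 * ∑ j ∈ Icc 1 n, 1 / (j : ℝ) ^ 2 - μ * ∑ j ∈ Icc 1 n, (j : ℝ)⁻¹ := by
      rw [mul_sum, mul_sum, ← sum_sub_distrib]
      exact sum_congr rfl fun _ _ ↦ by ring
    have hquad := mul_le_mul_of_nonneg_left (sum_Icc_one_div_sq_le_pi_sq_div_six n)
      (by positivity : 0 ≤ μ ^ 2 / 2)
    have hlin := mul_le_mul_of_nonneg_left (log_add_one_le_sum_Icc_inv n) hμ
    linarith
  calc ∏ j ∈ Icc 1 n, (j : ℝ) / (μ + (j + 1) * (1 + β))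
      ≤ ∏ j ∈ Icc 1 n, exp ((μ / j) ^ 2 / 2 - μ / j) :=
        prod_le_prod (fun _ _ ↦ div_nonneg (Nat.cast_nonneg _) (by positivity))
          fun j hj ↦ natCast_div_add_succ_mul_le_exp hβ hμ (mem_Icc.1 hj).1
    _ = exp (∑ j ∈ Icc 1 n, ((μ / j) ^ 2 / 2 - μ / j)) := (exp_sum _ _).symm
    _ ≤ exp (μ ^ 2 * π ^ 2 / 12 - μ * log (n + 1)) := exp_le_exp.2 hsum
    _ = exp (μ ^ 2 * π ^ 2 / 12) * ((n : ℝ) + 1) ^ (-μ) := by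
        rw [exp_sub, rpow_def_of_pos (by positivity), div_eq_mul_inv, ← exp_neg, mul_neg,
          mul_comm (log _) μ]

end

theorem stmt12_general (β μ : ℝ) (hβ0 : 0 < β) (hμ : 0 < μ)
    (n : ℕ) :
    ∏ j ∈ Finset.Icc 1 n, (j : ℝ) / (μ + ((j : ℝ) + 1) * (1 + β)) ≤
      Real.exp (μ ^ 2 * Real.pi ^ 2 / 12) * ((n : ℝ) + 1) ^ (-(μ * (1 - β))) := by
  refine (prod_Icc_natCast_div_add_succ_mul_le hβ0.le hμ.le n).trans ?_
  gcongr
  · linarith [(n.cast_nonneg : (0 : ℝ) ≤ n)]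
  · nlinarith

/-- **Key estimate of Theorem 3 (polynomial-lifetime critical SIS regime).**
For `0 < β ≤ 1`, `μ > 0` and every integer `n ≥ 1`,
`∏_{j=1}^{n} j/(μ + (j+1)(1+β)) ≤ exp(μ²π²/12)·(n+1)^{−μ(1−β)}`. -/
theorem stmt12 (β μ : ℝ) (hβ0 : 0 < β) (hβ1 : β ≤ 1) (hμ : 0 < μ)
    (n : ℕ) (hn : 1 ≤ n) :
    ∏ j ∈ Finset.Icc 1 n, (j : ℝ) / (μ + ((j : ℝ) + 1) * (1 + β)) ≤
      Real.exp (μ ^ 2 * Real.pi ^ 2 / 12) * ((n : ℝ) + 1) ^ (-(μ * (1 - β))) :=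
  stmt12_general β μ hβ0 hμ n
end
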